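/- For every p ≥ 1, the function φ_p(w) = ∫_{ℝ²} Ψ_{|·|^p}(x,y,w) · (1/(2π)) e^{−(x²+y²)/2} dx dy is absolutely integrable over ℝ: ∫_ℝ |φ_p(w)| dw < ∞, where Ψ_{|·|^p}(x,y,w) = (|y+w|^p − |x|^p)·1{x−y ≤ w ≤ 0} + (|x−w|^p − |y|^p)·1{0 ≤ w ≤ x−y}. -/

import Mathlib

open MeasureTheory Real

/-- `Ψ_{|·|^p}(x, y, w)`. -/
noncomputable def PsiAbsPow (p : ℕ) (x y w : ℝ) : ℝ :=
  (|y + w| ^ p - |x| ^ p) * (if x - y ≤ w ∧ w ≤ 0 then (1:ℝ) else 0)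
    + (|x - w| ^ p - |y| ^ p) * (if 0 ≤ w ∧ w ≤ x - y then (1:ℝ) else 0)

/-- `φ_p(w) = ∫_{ℝ²} Ψ_{|·|^p}(x,y,w) (2π)⁻¹ e^{-(x²+y²)/2} dx dy`. -/
noncomputable def phiP (p : ℕ) (w : ℝ) : ℝ :=
  ∫ q : ℝ × ℝ,
    PsiAbsPow p q.1 q.2 w * ((1 / (2 * π)) * Real.exp (-(q.1 ^ 2 + q.2 ^ 2) / 2))

/-! `Ψ(x, y, ·)` vanishes outside `[-|x - y|, |x - y|]` and is bounded there by
`2 (2 (|x| + |y|))^p`, so `∫ |Ψ(x, y, w)| dw` grows only polynomially in `(x, y)` and is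
integrable against the Gaussian weight. Fubini then yields the integrability of `φ_p`. -/

open Set

section PsiAbsPow

variable (p : ℕ)

lemma psiAbsPow_eq_zero_of_abs_sub_lt {x y w : ℝ} (h : |x - y| < |w|) :
    PsiAbsPow p x y w = 0 := by
  have h₁ : ¬(x - y ≤ w ∧ w ≤ 0) := fun ⟨hxy, hw⟩ => by
    rw [abs_of_nonpos hw] at h; linarith [neg_abs_le (x - y)]
  have h₂ : ¬(0 ≤ w ∧ w ≤ x - y) := fun ⟨hw, hxy⟩ => by
    rw [abs_of_nonneg hw] at h; linarith [le_abs_self (x - y)]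
  rw [PsiAbsPow, if_neg h₁, if_neg h₂]
  ring

lemma abs_psiAbsPow_le {x y w : ℝ} (h : |w| ≤ |x| + |y|) :
    |PsiAbsPow p x y w| ≤ 2 * (2 * (|x| + |y|)) ^ p := by
  have hpow : ∀ {t : ℝ}, |t| ≤ 2 * (|x| + |y|) → |t| ^ p ≤ (2 * (|x| + |y|)) ^ p :=
    fun ht => pow_le_pow_left₀ (abs_nonneg _) ht p
  have hterm : ∀ {a b : ℝ}, |a| ≤ 2 * (|x| + |y|) → |b| ≤ 2 * (|x| + |y|) →
      ∀ (P : Prop) [Decidable P],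
        |(|a| ^ p - |b| ^ p) * (if P then (1:ℝ) else 0)| ≤ (2 * (|x| + |y|)) ^ p := by
    intro a b ha hb P _
    calc |(|a| ^ p - |b| ^ p) * (if P then (1:ℝ) else 0)| ≤ |(|a| ^ p - |b| ^ p)| * 1 := by
          rw [abs_mul]; gcongr; split_ifs <;> simp
      _ ≤ (2 * (|x| + |y|)) ^ p := by
          rw [mul_one]
          exact abs_sub_le_of_nonneg_of_le (by positivity) (hpow ha) (by positivity) (hpow hb)
  have hx : |x| ≤ 2 * (|x| + |y|) := by linarith [abs_nonneg x, abs_nonneg y]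
  have hy : |y| ≤ 2 * (|x| + |y|) := by linarith [abs_nonneg x, abs_nonneg y]
  have hyw : |y + w| ≤ 2 * (|x| + |y|) := by linarith [abs_add_le y w, abs_nonneg x]
  have hxw : |x - w| ≤ 2 * (|x| + |y|) := by linarith [abs_sub x w, abs_nonneg y]
  calc |PsiAbsPow p x y w| ≤ (2 * (|x| + |y|)) ^ p + (2 * (|x| + |y|)) ^ p :=
        (abs_add_le _ _).trans (add_le_add (hterm hyw hx _) (hterm hxw hy _))
    _ = 2 * (2 * (|x| + |y|)) ^ p := by ring

lemma abs_psiAbsPow_le_indicator (x y w : ℝ) :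
    |PsiAbsPow p x y w| ≤
      (Icc (-(|x| + |y|)) (|x| + |y|)).indicator (fun _ => 2 * (2 * (|x| + |y|)) ^ p) w := by
  by_cases hw : w ∈ Icc (-(|x| + |y|)) (|x| + |y|)
  · rw [indicator_of_mem hw]
    exact abs_psiAbsPow_le p (abs_le.2 hw)
  · rw [indicator_of_notMem hw, psiAbsPow_eq_zero_of_abs_sub_lt, abs_zero]
    calc |x - y| ≤ |x| + |y| := abs_sub _ _
      _ < |w| := by rw [mem_Icc, ← abs_le] at hw; exact not_le.1 hw

lemma measurable_psiAbsPow :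
    Measurable fun a : (ℝ × ℝ) × ℝ => PsiAbsPow p a.1.1 a.1.2 a.2 := by
  have hle : ∀ {f g : (ℝ × ℝ) × ℝ → ℝ}, Measurable f → Measurable g →
      MeasurableSet {a | f a ≤ g a} := measurableSet_le
  unfold PsiAbsPow
  refine .add (.mul (by fun_prop) (.ite ?_ measurable_const measurable_const))
    (.mul (by fun_prop) (.ite ?_ measurable_const measurable_const)) <;>
    exact (hle (by fun_prop) (by fun_prop)).inter (hle (by fun_prop) (by fun_prop))

end PsiAbsPow

lemma integrable_abs_pow_mul_exp_neg_sq_div_two (k : ℕ) :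
    Integrable fun t : ℝ => |t| ^ k * exp (-t ^ 2 / 2) := by
  refine (integrable_rpow_mul_exp_neg_mul_sq (b := 1 / 2) (by norm_num) (s := k)
    (by linarith [k.cast_nonneg (α := ℝ)])).abs.congr (ae_of_all _ fun t => ?_)
  simp only [rpow_natCast, abs_mul, abs_pow, abs_exp]
  ring_nf

lemma integrable_abs_add_abs_pow_mul_exp_neg_sq_div_two (n : ℕ) :
    Integrable fun q : ℝ × ℝ => (|q.1| + |q.2|) ^ n * exp (-(q.1 ^ 2 + q.2 ^ 2) / 2) := by
  have hprod : ∀ j k : ℕ, Integrable (fun q : ℝ × ℝ =>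
      (|q.1| ^ j * exp (-q.1 ^ 2 / 2)) * (|q.2| ^ k * exp (-q.2 ^ 2 / 2))) := fun j k => by
    rw [Measure.volume_eq_prod]
    exact (integrable_abs_pow_mul_exp_neg_sq_div_two j).mul_prod
      (integrable_abs_pow_mul_exp_neg_sq_div_two k)
  refine (((hprod n 0).add (hprod 0 n)).const_mul (2 ^ (n - 1))).mono' (by fun_prop)
    (ae_of_all _ fun q => ?_)
  have hexp : exp (-(q.1 ^ 2 + q.2 ^ 2) / 2) = exp (-q.1 ^ 2 / 2) * exp (-q.2 ^ 2 / 2) := by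
    rw [← exp_add]; ring_nf
  rw [norm_of_nonneg (by positivity), hexp]
  calc (|q.1| + |q.2|) ^ n * (exp (-q.1 ^ 2 / 2) * exp (-q.2 ^ 2 / 2))
      ≤ 2 ^ (n - 1) * (|q.1| ^ n + |q.2| ^ n) * (exp (-q.1 ^ 2 / 2) * exp (-q.2 ^ 2 / 2)) := by
        gcongr; exact add_pow_le (abs_nonneg _) (abs_nonneg _) n
    _ = _ := by simp only [Pi.add_apply]; ring

lemma integrable_prod_of_norm_le_indicator_Icc {α E : Type*} [MeasurableSpace α]
    {μ : Measure α} [NormedAddCommGroup E] {f : α × ℝ → E}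
    (hf : AEStronglyMeasurable f (μ.prod volume)) {R g : α → ℝ} (hR : ∀ a, 0 ≤ R a)
    (hg : Integrable (fun a => R a * g a) μ)
    (hle : ∀ a w, ‖f (a, w)‖ ≤ (Icc (-R a) (R a)).indicator (fun _ => g a) w) :
    Integrable f (μ.prod volume) := by
  have hdom : ∀ a, Integrable ((Icc (-R a) (R a)).indicator fun _ => g a) := fun a =>
    (integrable_indicator_iff measurableSet_Icc).2 (integrableOn_const measure_Icc_lt_top.ne)
  refine (integrable_prod_iff hf).2 ⟨hf.prodMk_left.mono fun a ha =>
    (hdom a).mono' ha (ae_of_all _ (hle a)), ?_⟩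
  refine (hg.const_mul 2).mono' hf.norm.integral_prod_right' (ae_of_all _ fun a => ?_)
  rw [norm_of_nonneg (integral_nonneg fun _ => norm_nonneg _)]
  calc ∫ w, ‖f (a, w)‖ ≤ ∫ w, (Icc (-R a) (R a)).indicator (fun _ => g a) w :=
        integral_mono_of_nonneg (ae_of_all _ fun _ => norm_nonneg _) (hdom a)
          (ae_of_all _ (hle a))
    _ = 2 * (R a * g a) := by
        rw [integral_indicator_const _ measurableSet_Icc,
          volume_real_Icc_of_le (by linarith [hR a]), smul_eq_mul]
        ring

theorem phiP_integrable_general (p : ℕ) :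
    MeasureTheory.Integrable (phiP p) := by
  have hF : Integrable (fun a : (ℝ × ℝ) × ℝ => PsiAbsPow p a.1.1 a.1.2 a.2 *
      (1 / (2 * π) * exp (-(a.1.1 ^ 2 + a.1.2 ^ 2) / 2))) (volume.prod volume) := by
    refine integrable_prod_of_norm_le_indicator_Icc (R := fun q => |q.1| + |q.2|)
      (g := fun q => 2 * (2 * (|q.1| + |q.2|)) ^ p *
        (1 / (2 * π) * exp (-(q.1 ^ 2 + q.2 ^ 2) / 2)))
      ((measurable_psiAbsPow p).mul (by fun_prop)).aestronglyMeasurable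
      (fun _ => by positivity) ?_ fun q w => ?_
    · exact ((integrable_abs_add_abs_pow_mul_exp_neg_sq_div_two (p + 1)).const_mul
        (2 ^ p / π)).congr (ae_of_all _ fun q => by simp only [mul_pow]; ring)
    · have hG : 0 ≤ 1 / (2 * π) * exp (-(q.1 ^ 2 + q.2 ^ 2) / 2) := by positivity
      dsimp only
      rw [norm_mul, indicator_mul_left, norm_of_nonneg hG, Real.norm_eq_abs]
      exact mul_le_mul_of_nonneg_right (abs_psiAbsPow_le_indicator p q.1 q.2 w) hG
  exact hF.integral_prod_right

theorem phiP_integrable (p : ℕ) (hp : 1 ≤ p) :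
    MeasureTheory.Integrable (phiP p) :=
  phiP_integrable_general p
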